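/- The QBF encoding into D is correct: for a quantified Boolean formula Q, the D-formula enc(Q) obtained by replacing ∃x.φ with ∃̇ σx.(enc(φ))({0,1}) and ∀x.φ with ¬∃̇ σx.(¬enc(φ))({0,1}), and Boolean literals x (resp. ¬x) with x = 1 (resp. x = 0), is satisfiable iff Q is true. -/

import Mathlib

namespace DLogic

/-- Integer terms of the logic D (rows are flattened into tuples of integers;
`col d i` is de Bruijn-style access to column `i` of the row bound by the
`d`-th enclosing selection). -/
inductive Term : Type
  | var : ℕ → Term
  | col : ℕ → ℕ → Term
  | const : ℤ → Term
  | add : Term → Term → Term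
  | mul : ℤ → Term → Term

mutual
  /-- Table expressions of D. -/
  inductive Table : Type
    | input : List (List Term) → Table
    | sel : Formula → Table → Table
    | prod : Table → Table → Table
    | union : Table → Table → Table
  /-- Formulas of D. -/
  inductive Formula : Type
    | le : Term → Term → Formula
    | nonempty : Table → Formula
    | not : Formula → Formula
    | or : Formula → Formula → Formula
end

def Term.eval (env : ℕ → ℤ) (stk : List (List ℤ)) : Term → ℤ
  | .var n => env n
  | .col d i => (stk.getD d []).getD i 0
  | .const k => k
  | .add a b => a.eval env stk + b.eval env stk
  | .mul k t => k * t.eval env stk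

mutual
  /-- The finite set (list) of rows denoted by a table expression. -/
  def Table.eval (env : ℕ → ℤ) (stk : List (List ℤ)) : Table → List (List ℤ)
    | .input rows => rows.map (fun r => r.map (fun t => t.eval env stk))
    | .sel F D => (D.eval env stk).filter (fun r => F.eval env (r :: stk))
    | .prod D₁ D₂ =>
        (D₁.eval env stk).flatMap (fun r₁ => (D₂.eval env stk).map (fun r₂ => r₁ ++ r₂))
    | .union D₁ D₂ => D₁.eval env stk ++ D₂.eval env stk
  /-- Truth value of a D formula. -/
  def Formula.eval (env : ℕ → ℤ) (stk : List (List ℤ)) : Formula → Bool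
    | .le t₁ t₂ => decide (t₁.eval env stk ≤ t₂.eval env stk)
    | .nonempty D => !(D.eval env stk).isEmpty
    | .not F => !(F.eval env stk)
    | .or F₁ F₂ => F₁.eval env stk || F₂.eval env stk
end

/-- Satisfiability of a D formula. -/
def Satisfiable (F : Formula) : Prop := ∃ env : ℕ → ℤ, F.eval env [] = true

end DLogic

namespace DLogic

def Term.size : Term → ℕ
  | .var _ => 1
  | .col _ _ => 1
  | .const _ => 1
  | .add a b => a.size + b.size + 1
  | .mul _ t => t.size + 1

mutual
  def Table.size : Table → ℕ
    | .input rows => 1 + (rows.map (fun r => 1 + (r.map Term.size).sum)).sum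
    | .sel F D => 1 + F.size + D.size
    | .prod D₁ D₂ => 1 + D₁.size + D₂.size
    | .union D₁ D₂ => 1 + D₁.size + D₂.size
  def Formula.size : Formula → ℕ
    | .le t₁ t₂ => 1 + t₁.size + t₂.size
    | .nonempty D => 1 + D.size
    | .not F => 1 + F.size
    | .or F₁ F₂ => 1 + F₁.size + F₂.size
end

/-- Derived equality `t₁ = t₂` in D: `t₁ ≤ t₂ ∧ t₂ ≤ t₁`. -/
def Formula.eq (t₁ t₂ : Term) : Formula :=
  .not (.or (.not (.le t₁ t₂)) (.not (.le t₂ t₁)))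

/-- Quantified Boolean formulas (closed QBF, de Bruijn indices for
quantified Boolean variables). -/
inductive QBF : Type
  | var : ℕ → QBF
  | not : QBF → QBF
  | or : QBF → QBF → QBF
  | forall_ : QBF → QBF
  | exists_ : QBF → QBF

def QBF.eval (stk : List Bool) : QBF → Bool
  | .var n => stk.getD n false
  | .not q => !(q.eval stk)
  | .or q₁ q₂ => q₁.eval stk || q₂.eval stk
  | .forall_ q => q.eval (false :: stk) && q.eval (true :: stk)
  | .exists_ q => q.eval (false :: stk) || q.eval (true :: stk)

def QBF.size : QBF → ℕ
  | .var _ => 1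
  | .not q => 1 + q.size
  | .or q₁ q₂ => 1 + q₁.size + q₂.size
  | .forall_ q => 1 + q.size
  | .exists_ q => 1 + q.size

/-- The one-column table `B = {0, 1}`. -/
def boolTable : Table := .input [[.const 0], [.const 1]]

/-- The encoding of QBF into D: `∃x.φ` becomes `∃̇ σx.(enc φ)({0,1})`,
`∀x.φ` becomes `¬∃̇ σx.(¬ enc φ)({0,1})`, and a Boolean variable becomes
the comparison of the corresponding (σ-bound) integer variable with 1. -/
def QBF.enc : QBF → Formula
  | .var n => Formula.eq (.col n 0) (.const 1)
  | .not q => .not q.enc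
  | .or q₁ q₂ => .or q₁.enc q₂.enc
  | .forall_ q => .not (.nonempty (.sel (.not q.enc) boolTable))
  | .exists_ q => .nonempty (.sel q.enc boolTable)

end DLogic

/-! A selection over `{0,1}` pushes a row `[0]` or `[1]` onto the stack exactly where the QBF
quantifier pushes `false` or `true`, so by induction `enc q`, evaluated on the rows of a Boolean
assignment, computes `q` under that assignment, whatever the integer environment. -/

namespace DLogic

def boolRow (b : Bool) : List ℤ := [if b then 1 else 0]

lemma getD_map_boolRow (bs : List Bool) (n : ℕ) :
    ((bs.map boolRow).getD n []).getD 0 0 = if bs.getD n false then 1 else 0 := by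
  induction bs generalizing n with
  | nil => simp
  | cons b bs ih =>
    cases n with
    | zero => cases b <;> simp [boolRow]
    | succ n => simpa using ih n

lemma Formula.eval_nonempty_sel_boolTable (F : Formula) (env : ℕ → ℤ) (stk : List (List ℤ)) :
    (Formula.nonempty (.sel F boolTable)).eval env stk =
      (F.eval env (boolRow false :: stk) || F.eval env (boolRow true :: stk)) := by
  simp only [Formula.eval, Table.eval, boolTable, Term.eval, List.map, List.filter, boolRow,
    Bool.false_eq_true, ↓reduceIte]
  cases F.eval env ([0] :: stk) <;> cases F.eval env ([1] :: stk) <;> rfl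

theorem QBF.eval_enc (q : QBF) (env : ℕ → ℤ) (bs : List Bool) :
    q.enc.eval env (bs.map boolRow) = q.eval bs := by
  induction q generalizing bs with
  | var n =>
    simp only [QBF.enc, QBF.eval, Formula.eq, Formula.eval, Term.eval, getD_map_boolRow]
    cases bs.getD n false <;> simp
  | not q ih => simp [QBF.enc, QBF.eval, Formula.eval, ih]
  | or q₁ q₂ ih₁ ih₂ => simp [QBF.enc, QBF.eval, Formula.eval, ih₁, ih₂]
  | forall_ q ih =>
    rw [QBF.enc, Formula.eval, Formula.eval_nonempty_sel_boolTable]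
    simp only [Formula.eval, ← List.map_cons, ih, QBF.eval]
    cases q.eval (false :: bs) <;> cases q.eval (true :: bs) <;> rfl
  | exists_ q ih =>
    simp only [QBF.enc, QBF.eval, Formula.eval_nonempty_sel_boolTable]
    rw [← List.map_cons, ← List.map_cons, ih, ih]

end DLogic

/-- The QBF encoding into D is correct: for a closed
quantified Boolean formula `q`, the D-formula `q.enc` (replacing `∃x.φ` by
`∃̇ σx.(enc φ)({0,1})`, `∀x.φ` by `¬∃̇ σx.(¬enc φ)({0,1})`, and literals by
comparisons with 0/1) is satisfiable iff `q` is true. -/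
theorem DLogic.qbf_encoding_correct (q : DLogic.QBF) :
    DLogic.Satisfiable q.enc ↔ q.eval [] = true := by
  have h : ∀ env, q.enc.eval env [] = q.eval [] := fun env => q.eval_enc env []
  simp [DLogic.Satisfiable, h]
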